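/- For fixed x with 1 ≤ x ≤ n, and a uniformly random perfect matching M of K_{2n}, the probability that M contains a fixed x-matching X is at most 1 / Σ_{j=max(0,2x-n)}^{x} C(2x,2j)·(2j)!/(j!·2^j). -/

import Mathlib

/-!
Sort the perfect matchings `M` of `K_{2n}` by the set `M.filter (· ⊆ W)` of their edges inside
the vertex set `W` of `X` (`#W = 2x`). If this pattern has `j` edges, the other `2x - 2j` vertices
of `W` must be matched into the `2n - 2x` vertices outside `W`, so the pattern has
`(2n - 2x).descFactorial (2x - 2j) * (2n - 4x + 2j - 1)‼` completions, which is at least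
`(2n - 2x - 1)‼ = #{M | X ⊆ M}` as soon as `2x - 2j ≤ 2n - 2x`, i.e. `2x - n ≤ j`. There are
`C(2x, 2j) * (2j - 1)‼ = C(2x, 2j) * (2j)! / (j! 2^j)` patterns with `j` edges, and the fibres over
distinct patterns are disjoint.
-/

open Finset

/-- A matching: a set of pairwise disjoint edges (2-element vertex sets). -/
def IsMatching {V : Type} [DecidableEq V] (M : Finset (Finset V)) : Prop :=
  (∀ e ∈ M, e.card = 2) ∧ (M : Set (Finset V)).Pairwise Disjoint

/-- A perfect matching of the complete graph on `V`: a matching covering every vertex. -/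
def IsPerfectMatching {V : Type} [DecidableEq V] (M : Finset (Finset V)) : Prop :=
  IsMatching M ∧ ∀ v : V, ∃ e ∈ M, v ∈ e

open Nat

theorem Nat.mul_descFactorial_sub_one {q c : ℕ} (hc : c ≠ 0) :
    q * (q - 1).descFactorial (c - 1) = q.descFactorial c := by
  obtain ⟨c, rfl⟩ := exists_eq_succ_of_ne_zero hc
  cases q with
  | zero => simp
  | succ q => rw [succ_sub_one, succ_sub_one, succ_descFactorial_succ]

theorem Nat.doubleFactorial_le_succ : ∀ n : ℕ, n‼ ≤ (n + 1)‼
  | 0 => le_rfl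
  | 1 => by decide
  | n + 2 => by
    rw [doubleFactorial_add_two, show n + 2 + 1 = n + 1 + 2 by rfl, doubleFactorial_add_two]
    exact Nat.mul_le_mul (by omega) (doubleFactorial_le_succ n)

theorem Nat.doubleFactorial_sub_one_le_descFactorial_mul {q c : ℕ} (hc : c ≤ q) :
    (q - 1)‼ ≤ q.descFactorial c * (q - c - 1)‼ := by
  induction c with
  | zero => simp
  | succ c ih =>
    obtain ⟨k, hk⟩ : ∃ k, q - c = k + 1 := ⟨q - c - 1, by omega⟩
    calc (q - 1)‼ ≤ q.descFactorial c * (q - c - 1)‼ := ih (by omega)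
      _ ≤ q.descFactorial c * ((q - c) * (q - (c + 1) - 1)‼) := by
        rw [hk, show q - (c + 1) - 1 = k - 1 by omega, ← doubleFactorial_add_one,
          show k + 1 - 1 = k by rfl]
        exact Nat.mul_le_mul_left _ (doubleFactorial_le_succ k)
      _ = q.descFactorial (c + 1) * (q - (c + 1) - 1)‼ := by
        rw [descFactorial_succ]
        ring

theorem Nat.factorial_two_mul (j : ℕ) : (2 * j)! = 2 ^ j * j ! * (2 * j - 1)‼ := by
  cases j with
  | zero => rfl
  | succ k =>
    rw [show 2 * (k + 1) = 2 * k + 1 + 1 by ring, factorial_eq_mul_doubleFactorial,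
      show 2 * k + 1 + 1 = 2 * (k + 1) by ring, doubleFactorial_two_mul,
      show 2 * (k + 1) - 1 = 2 * k + 1 by omega]

theorem Nat.cast_factorial_two_mul_div (j : ℕ) :
    ((2 * j)! : ℚ) / (j ! * 2 ^ j) = (2 * j - 1)‼ := by
  rw [factorial_two_mul]
  push_cast
  field_simp

variable {V : Type} [DecidableEq V]

def IsPerfectMatchingOn (s : Finset V) (M : Finset (Finset V)) : Prop :=
  IsMatching M ∧ M.biUnion id = s

namespace IsPerfectMatchingOn

variable {s t : Finset V} {M N : Finset (Finset V)}

theorem card_edge (h : IsPerfectMatchingOn s M) {e : Finset V} (he : e ∈ M) : #e = 2 :=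
  h.1.1 e he

theorem subset_of_mem (h : IsPerfectMatchingOn s M) {e : Finset V} (he : e ∈ M) : e ⊆ s :=
  h.2 ▸ subset_biUnion_of_mem id he

theorem exists_mem (h : IsPerfectMatchingOn s M) {a : V} (ha : a ∈ s) : ∃ e ∈ M, a ∈ e := by
  rw [← h.2] at ha
  simpa using ha

theorem card_eq (h : IsPerfectMatchingOn s M) : #s = 2 * #M := by
  rw [← h.2, card_biUnion (t := id) h.1.2, sum_const_nat (f := fun e => #(id e)) (m := 2) h.1.1,
    mul_comm]

theorem disjoint (h : IsPerfectMatchingOn s M) (h' : IsPerfectMatchingOn t N)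
    (hst : Disjoint s t) : Disjoint M N := by
  refine disjoint_left.2 fun e heM heN => ?_
  obtain ⟨v, hv⟩ := card_pos.1 (h.card_edge heM ▸ two_pos)
  exact disjoint_left.1 hst (h.subset_of_mem heM hv) (h'.subset_of_mem heN hv)

theorem union (h : IsPerfectMatchingOn s M) (h' : IsPerfectMatchingOn t N)
    (hst : Disjoint s t) : IsPerfectMatchingOn (s ∪ t) (M ∪ N) := by
  refine ⟨⟨fun e he => (mem_union.1 he).elim h.card_edge h'.card_edge, ?_⟩, ?_⟩
  · rw [coe_union, Set.pairwise_union_of_symm]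
    refine ⟨h.1.2, h'.1.2, fun e he f hf _ => ?_⟩
    exact disjoint_of_subset_left (h.subset_of_mem he)
      (disjoint_of_subset_right (h'.subset_of_mem hf) hst)
  · rw [union_biUnion, h.2, h'.2]

theorem sdiff (h : IsPerfectMatchingOn s M) {U : Finset V} {P : Finset (Finset V)}
    (hP : IsPerfectMatchingOn U P) (hPM : P ⊆ M) : IsPerfectMatchingOn (s \ U) (M \ P) := by
  refine ⟨⟨fun e he => h.card_edge (mem_sdiff.1 he).1, h.1.2.mono (by simp)⟩, ?_⟩
  ext v
  simp only [mem_biUnion, mem_sdiff, id_eq, ← hP.2, not_exists, not_and]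
  constructor
  · rintro ⟨e, ⟨heM, heP⟩, hv⟩
    refine ⟨h.subset_of_mem heM hv, fun p hp hvp => heP ?_⟩
    rwa [Set.PairwiseDisjoint.elim_finset (f := id) h.1.2 heM (hPM hp) v hv hvp]
  · rintro ⟨hvs, hvU⟩
    obtain ⟨e, heM, hv⟩ := h.exists_mem hvs
    exact ⟨e, ⟨heM, fun heP => hvU e heP hv⟩, hv⟩

theorem pair {a b : V} (hab : a ≠ b) : IsPerfectMatchingOn {a, b} {{a, b}} :=
  ⟨⟨by simpa using card_pair hab, by simp⟩, by simp⟩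

end IsPerfectMatchingOn

theorem Finset.exists_eq_pair_of_card_eq_two {e : Finset V} (he : #e = 2) {a : V} (ha : a ∈ e) :
    ∃ y, a ≠ y ∧ e = {a, y} := by
  obtain ⟨y, hy⟩ := card_eq_one.1 (by rw [card_erase_of_mem ha, he] : #(e.erase a) = 1)
  refine ⟨y, fun hay => ?_, ?_⟩
  · exact ne_of_mem_erase (hy ▸ mem_singleton_self y : y ∈ e.erase a) hay.symm
  · rw [← insert_erase ha, hy]

open Classical in
noncomputable def perfectMatchings (s : Finset V) : Finset (Finset (Finset V)) :=
  {M ∈ s.powerset.powerset | IsPerfectMatchingOn s M}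

theorem mem_perfectMatchings {s : Finset V} {M : Finset (Finset V)} :
    M ∈ perfectMatchings s ↔ IsPerfectMatchingOn s M := by
  classical
  rw [perfectMatchings, mem_filter, mem_powerset]
  exact and_iff_right_of_imp fun h e he => mem_powerset.2 (h.subset_of_mem he)

theorem perfectMatchings_empty : perfectMatchings (∅ : Finset V) = {∅} := by
  ext M
  rw [mem_perfectMatchings, mem_singleton]
  refine ⟨fun h => card_eq_zero.1 (by simpa using h.card_eq.symm), ?_⟩
  rintro rfl
  exact ⟨⟨by simp, by simp⟩, by simp⟩

theorem card_filter_superset_perfectMatchings {s U : Finset V} {P : Finset (Finset V)}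
    (hP : IsPerfectMatchingOn U P) (hU : U ⊆ s) (Q : Finset (Finset V) → Prop)
    [DecidablePred Q] :
    #{M ∈ perfectMatchings s | P ⊆ M ∧ Q (M \ P)} = #{N ∈ perfectMatchings (s \ U) | Q N} := by
  have hdisj {N} (hN : N ∈ perfectMatchings (s \ U)) : Disjoint N P :=
    (mem_perfectMatchings.1 hN).disjoint hP sdiff_disjoint
  refine card_bij' (fun M _ => M \ P) (fun N _ => N ∪ P) ?_ ?_ ?_ ?_
  · intro M hM
    simp only [mem_filter, mem_perfectMatchings] at hM ⊢
    exact ⟨hM.1.sdiff hP hM.2.1, hM.2.2⟩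
  · intro N hN
    simp only [mem_filter, mem_perfectMatchings,
      union_sdiff_cancel_right (hdisj (mem_filter.1 hN).1)] at hN ⊢
    refine ⟨?_, subset_union_right, hN.2⟩
    simpa [sdiff_union_of_subset hU] using hN.1.union hP sdiff_disjoint
  · intro M hM
    exact sdiff_union_of_subset (mem_filter.1 hM).2.1
  · intro N hN
    exact union_sdiff_cancel_right (hdisj (mem_filter.1 hN).1)

/-- Condition on the partner `y` of `a`. -/
theorem card_filter_perfectMatchings_eq_sum (T : Finset V) {s : Finset V} {a : V} (ha : a ∈ s) :
    #{M ∈ perfectMatchings s | ∀ e ∈ M, ¬e ⊆ T} =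
      ∑ y ∈ s.erase a with ¬{a, y} ⊆ T,
        #{M ∈ perfectMatchings (s \ {a, y}) | ∀ e ∈ M, ¬e ⊆ T} := by
  set A := {M ∈ perfectMatchings s | ∀ e ∈ M, ¬e ⊆ T}
  have hA : A = ({y ∈ s.erase a | ¬{a, y} ⊆ T} : Finset V).biUnion
      fun y => {M ∈ A | {a, y} ∈ M} := by
    ext M
    simp only [mem_biUnion, mem_filter, mem_erase]
    refine ⟨fun hM => ?_, fun ⟨_, _, hM, _⟩ => hM⟩
    have hpm := mem_perfectMatchings.1 (mem_filter.1 hM).1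
    obtain ⟨e, he, hae⟩ := hpm.exists_mem ha
    obtain ⟨y, hay, rfl⟩ := exists_eq_pair_of_card_eq_two (hpm.card_edge he) hae
    exact ⟨y, ⟨⟨hay.symm, hpm.subset_of_mem he (by simp)⟩, (mem_filter.1 hM).2 _ he⟩, hM, he⟩
  rw [hA, card_biUnion]
  · refine sum_congr rfl fun y hy => ?_
    simp only [mem_filter, mem_erase] at hy
    have hsub : ({a, y} : Finset V) ⊆ s := by simp [insert_subset_iff, ha, hy.1.2]
    rw [← card_filter_superset_perfectMatchings (IsPerfectMatchingOn.pair hy.1.1.symm) hsub]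
    congr 1
    ext M
    simp only [A, mem_filter, singleton_subset_iff, mem_sdiff, mem_singleton]
    constructor
    · rintro ⟨⟨hM, hgood⟩, hyM⟩
      exact ⟨hM, hyM, fun e he => hgood e he.1⟩
    · rintro ⟨hM, hyM, hgood⟩
      refine ⟨⟨hM, fun e he => ?_⟩, hyM⟩
      by_cases hey : e = {a, y}
      · exact hey ▸ hy.2
      · exact hgood e ⟨he, hey⟩
  · intro y hy y' _ hyy'
    refine disjoint_left.2 fun M hM hM' => hyy' ?_
    simp only [A, mem_filter, mem_perfectMatchings] at hM hM'
    have hpair := Set.PairwiseDisjoint.elim_finset (f := id) hM.1.1.1.2 hM.2 hM'.2 a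
      (by simp) (by simp)
    have hya : y ≠ a := (mem_erase.1 (mem_filter.1 hy).1).1
    have hy' : y ∈ ({a, y'} : Finset V) := hpair ▸ mem_insert_of_mem (mem_singleton_self y)
    simpa [hya] using hy'

theorem card_filter_perfectMatchings_of_disjoint {s T : Finset V} (hsT : Disjoint s T)
    (hs : Even #s) : #{M ∈ perfectMatchings s | ∀ e ∈ M, ¬e ⊆ T} = (#s - 1)‼ := by
  obtain ⟨m, hm⟩ := hs
  induction m generalizing s with
  | zero =>
    obtain rfl : s = ∅ := card_eq_zero.1 hm
    simp [perfectMatchings_empty, filter_singleton]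
  | succ m ih =>
    obtain ⟨a, ha⟩ := card_pos.1 (by omega : 0 < #s)
    have hpartners : ({y ∈ s.erase a | ¬{a, y} ⊆ T} : Finset V) = s.erase a :=
      filter_true_of_mem fun y _ haT => disjoint_left.1 hsT ha (haT (mem_insert_self a {y}))
    have hterm : ∀ y ∈ s.erase a,
        (#{M ∈ perfectMatchings (s \ {a, y}) | ∀ e ∈ M, ¬e ⊆ T}) = (m + m - 1)‼ := by
      intro y hy
      have hsub : {a, y} ⊆ s := by simp [insert_subset_iff, ha, (mem_erase.1 hy).2]
      have hcard : #(s \ {a, y}) = m + m := by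
        rw [card_sdiff_of_subset hsub, card_pair (mem_erase.1 hy).1.symm]
        omega
      rw [ih (disjoint_of_subset_left sdiff_subset hsT) hcard, hcard]
    rw [card_filter_perfectMatchings_eq_sum T ha, hpartners, sum_congr rfl hterm, sum_const,
      smul_eq_mul, card_erase_of_mem ha, hm, show m + 1 + (m + 1) - 1 = m + m + 1 by omega,
      doubleFactorial_add_one]

theorem card_perfectMatchings {s : Finset V} (hs : Even #s) :
    #(perfectMatchings s) = (#s - 1)‼ := by
  rw [← card_filter_perfectMatchings_of_disjoint (disjoint_empty_right s) hs, filter_true_of_mem]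
  intro M hM e he hempty
  simpa [subset_empty.1 hempty] using (mem_perfectMatchings.1 hM).card_edge he

/-- Every vertex of `s ∩ T` is matched into `s \ T`, and the rest of `s \ T` among itself. -/
theorem card_filter_perfectMatchings_not_subset (T : Finset V) {s : Finset V} (hs : Even #s) :
    #{M ∈ perfectMatchings s | ∀ e ∈ M, ¬e ⊆ T} =
      (#(s \ T)).descFactorial #(s ∩ T) * (#(s \ T) - #(s ∩ T) - 1)‼ := by
  induction hc : #(s ∩ T) generalizing s with
  | zero =>
    have hsT : Disjoint s T := disjoint_iff_inter_eq_empty.2 (card_eq_zero.1 hc)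
    simp [card_filter_perfectMatchings_of_disjoint hsT hs, sdiff_eq_self_of_disjoint hsT]
  | succ c ih =>
    obtain ⟨a, ha⟩ := card_pos.1 (by omega : 0 < #(s ∩ T))
    rw [mem_inter] at ha
    have hpartners : ({y ∈ s.erase a | ¬{a, y} ⊆ T} : Finset V) = s \ T := by
      ext y
      simp only [mem_filter, mem_erase, mem_sdiff, insert_subset_iff, ha.2, true_and,
        singleton_subset_iff]
      exact ⟨fun h => ⟨h.1.2, h.2⟩, fun h => ⟨⟨fun hya => h.2 (hya ▸ ha.2), h.1⟩, h.2⟩⟩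
    have hterm : ∀ y ∈ s \ T, (#{M ∈ perfectMatchings (s \ {a, y}) | ∀ e ∈ M, ¬e ⊆ T}) =
        (#(s \ T) - 1).descFactorial c * (#(s \ T) - (c + 1) - 1)‼ := by
      intro y hy
      rw [mem_sdiff] at hy
      have hay : a ≠ y := fun hay => hy.2 (hay ▸ ha.2)
      have hsdiff : (s \ {a, y}) \ T = (s \ T).erase y := by
        ext v; simp only [mem_sdiff, mem_erase, mem_insert, mem_singleton]; aesop
      have hinter : (s \ {a, y}) ∩ T = (s ∩ T).erase a := by
        ext v; simp only [mem_sdiff, mem_inter, mem_erase, mem_insert, mem_singleton]; aesop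
      have heven : Even #(s \ {a, y}) := by
        rw [card_sdiff_of_subset (by simp [insert_subset_iff, ha.1, hy.1]), card_pair hay]
        exact hs.tsub even_two
      rw [ih heven (by rw [hinter, card_erase_of_mem (mem_inter.2 ha), hc, add_tsub_cancel_right]),
        hsdiff, card_erase_of_mem (mem_sdiff.2 hy)]
      congr 2
      omega
    rw [card_filter_perfectMatchings_eq_sum T ha.1, hpartners, sum_congr rfl hterm, sum_const,
      smul_eq_mul, ← mul_assoc, ← add_tsub_cancel_right c 1,
      Nat.mul_descFactorial_sub_one (succ_ne_zero c), add_tsub_cancel_right]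

theorem card_filter_perfectMatchings_filter_subset_eq {s W U : Finset V}
    {P : Finset (Finset V)} (hP : IsPerfectMatchingOn U P) (hUW : U ⊆ W) (hWs : W ⊆ s) :
    #{M ∈ perfectMatchings s | M.filter (· ⊆ W) = P} =
      #{N ∈ perfectMatchings (s \ U) | ∀ e ∈ N, ¬e ⊆ W} := by
  rw [← card_filter_superset_perfectMatchings hP (hUW.trans hWs)]
  congr 1
  refine filter_congr fun M _ => ⟨?_, fun ⟨hPM, hout⟩ => ?_⟩
  · rintro rfl
    exact ⟨filter_subset _ _, fun e he heW =>
      (mem_sdiff.1 he).2 (mem_filter.2 ⟨(mem_sdiff.1 he).1, heW⟩)⟩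
  · ext e
    rw [mem_filter]
    refine ⟨fun ⟨heM, heW⟩ => ?_, fun heP => ⟨hPM heP, (hP.subset_of_mem heP).trans hUW⟩⟩
    by_contra heP
    exact hout e (mem_sdiff.2 ⟨heM, heP⟩) heW

theorem card_perfectMatchings_sdiff_le_card_filter {s W U : Finset V} {P : Finset (Finset V)}
    (hP : IsPerfectMatchingOn U P) (hUW : U ⊆ W) (hWs : W ⊆ s) (hs : Even #s) (hW : Even #W)
    (hcard : #(W \ U) ≤ #(s \ W)) :
    #(perfectMatchings (s \ W)) ≤ #{M ∈ perfectMatchings s | M.filter (· ⊆ W) = P} := by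
  have hsU : (s \ U) \ W = s \ W := by rw [sdiff_sdiff_left, sup_eq_right.2 hUW]
  have hsUW : (s \ U) ∩ W = W \ U := by
    ext v
    simp only [mem_inter, mem_sdiff]
    exact ⟨fun h => ⟨h.2, h.1.2⟩, fun h => ⟨⟨hWs h.1, h.2⟩, h.1⟩⟩
  rw [card_filter_perfectMatchings_filter_subset_eq hP hUW hWs,
    card_filter_perfectMatchings_not_subset W
      (by rw [card_sdiff_of_subset (hUW.trans hWs), hP.card_eq]; exact hs.tsub (even_two_mul _)),
    card_perfectMatchings (by rw [card_sdiff_of_subset hWs]; exact hs.tsub hW), hsU, hsUW]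
  exact Nat.doubleFactorial_sub_one_le_descFactorial_mul hcard

/-- The pairing patterns on `W`: a partition of `W` into blocks of size at most two is determined
by its set of two-element blocks, a matching on a subset of `W`. -/
noncomputable def matchingsInside (W : Finset V) (J : Finset ℕ) : Finset (Finset (Finset V)) :=
  J.biUnion fun j => (W.powersetCard (2 * j)).biUnion perfectMatchings

theorem card_matchingsInside (W : Finset V) (J : Finset ℕ) :
    #(matchingsInside W J) = ∑ j ∈ J, (#W).choose (2 * j) * (2 * j - 1)‼ := by
  rw [matchingsInside, card_biUnion]
  · refine sum_congr rfl fun j _ => ?_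
    rw [card_biUnion, sum_const_nat fun U hU => ?_, card_powersetCard]
    · rw [card_perfectMatchings, (mem_powersetCard.1 hU).2]
      exact (mem_powersetCard.1 hU).2 ▸ even_two_mul j
    · intro U _ U' _ hUU'
      refine disjoint_left.2 fun P hP hP' => hUU' ?_
      rw [← (mem_perfectMatchings.1 hP).2, (mem_perfectMatchings.1 hP').2]
  · intro j _ j' _ hjj'
    refine disjoint_left.2 fun P hP hP' => hjj' ?_
    simp only [mem_biUnion, mem_powersetCard, mem_perfectMatchings] at hP hP'
    obtain ⟨U, ⟨-, hU⟩, hPU⟩ := hP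
    obtain ⟨U', ⟨-, hU'⟩, hPU'⟩ := hP'
    have := hPU.card_eq
    have := hPU'.card_eq
    omega

theorem sum_mul_card_perfectMatchings_sdiff_le {s W : Finset V} {n x : ℕ} (hs : #s = 2 * n)
    (hW : #W = 2 * x) (hWs : W ⊆ s) :
    (∑ j ∈ Icc (2 * x - n) x, (2 * x).choose (2 * j) * (2 * j - 1)‼) *
      #(perfectMatchings (s \ W)) ≤ #(perfectMatchings s) := by
  set A := matchingsInside W (Icc (2 * x - n) x)
  have hfiber : ∀ P ∈ A,
      #(perfectMatchings (s \ W)) ≤ #{M ∈ perfectMatchings s | M.filter (· ⊆ W) = P} := by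
    intro P hP
    simp only [A, matchingsInside, mem_biUnion, mem_powersetCard, mem_perfectMatchings,
      mem_Icc] at hP
    obtain ⟨j, hj, U, ⟨hUW, hU⟩, hPU⟩ := hP
    refine card_perfectMatchings_sdiff_le_card_filter hPU hUW hWs (hs ▸ even_two_mul n)
      (hW ▸ even_two_mul x) ?_
    rw [card_sdiff_of_subset hUW, card_sdiff_of_subset hWs, hU, hW, hs]
    omega
  calc _ = ∑ _P ∈ A, #(perfectMatchings (s \ W)) := by
        rw [sum_const, smul_eq_mul, card_matchingsInside, hW]
    _ ≤ ∑ P ∈ A, #{M ∈ perfectMatchings s | M.filter (· ⊆ W) = P} := sum_le_sum hfiber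
    _ = #{M ∈ perfectMatchings s | M.filter (· ⊆ W) ∈ A} :=
        sum_card_fiberwise_eq_card_filter _ _ _
    _ ≤ #(perfectMatchings s) := card_filter_le _ _

theorem isPerfectMatchingOn_univ_iff [Fintype V] {M : Finset (Finset V)} :
    IsPerfectMatchingOn univ M ↔ IsPerfectMatching M := by
  simp [IsPerfectMatchingOn, IsPerfectMatching, eq_univ_iff_forall]

theorem natCard_isPerfectMatching [Fintype V] :
    Nat.card {M : Finset (Finset V) // IsPerfectMatching M} =
      #(perfectMatchings (univ : Finset V)) := by
  rw [← Nat.card_eq_finsetCard]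
  exact Nat.card_congr (Equiv.subtypeEquivRight fun M => by
    rw [mem_perfectMatchings, isPerfectMatchingOn_univ_iff])

theorem natCard_isPerfectMatching_and [Fintype V] (p : Finset (Finset V) → Prop)
    [DecidablePred p] :
    Nat.card {M : Finset (Finset V) // IsPerfectMatching M ∧ p M} =
      #{M ∈ perfectMatchings (univ : Finset V) | p M} := by
  rw [← Nat.card_eq_finsetCard]
  exact Nat.card_congr (Equiv.subtypeEquivRight fun M => by
    rw [mem_filter, mem_perfectMatchings, isPerfectMatchingOn_univ_iff])

theorem probContainsMatchingUpperBound_general (n x : ℕ) (hxn : x ≤ n)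
    (X : Finset (Finset (Fin (2*n)))) (hX : IsMatching X) (hXcard : X.card = x) :
    (Nat.card {M : Finset (Finset (Fin (2*n))) // IsPerfectMatching M ∧ X ⊆ M} : ℚ) /
        (Nat.card {M : Finset (Finset (Fin (2*n))) // IsPerfectMatching M}) ≤
      1 / ∑ j ∈ Finset.Icc (2*x - n) x,
          (((2*x).choose (2*j) : ℚ) * ((2*j).factorial : ℚ)) /
            ((j.factorial : ℚ) * 2^j) := by
  set S := ∑ j ∈ Icc (2 * x - n) x, (2 * x).choose (2 * j) * (2 * j - 1)‼
  have hXon : IsPerfectMatchingOn (X.biUnion id) X := ⟨hX, rfl⟩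
  have hkey : S * Nat.card {M // IsPerfectMatching M ∧ X ⊆ M} ≤
      Nat.card {M : Finset (Finset (Fin (2*n))) // IsPerfectMatching M} := by
    have hcontain : #{M ∈ perfectMatchings univ | X ⊆ M} =
        #(perfectMatchings (univ \ X.biUnion id)) := by
      simpa using card_filter_superset_perfectMatchings hXon (subset_univ _) (fun _ => True)
    rw [natCard_isPerfectMatching_and, natCard_isPerfectMatching, hcontain]
    exact sum_mul_card_perfectMatchings_sdiff_le (by simp) (by rw [hXon.card_eq, hXcard])
      (subset_univ _)
  have hS : 0 < S := by
    refine lt_of_lt_of_le ?_ (single_le_sum (fun j _ => Nat.zero_le _)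
      (mem_Icc.2 ⟨by omega, le_rfl⟩ : x ∈ Icc (2 * x - n) x))
    simp [doubleFactorial_pos]
  simp_rw [mul_div_assoc, cast_factorial_two_mul_div, ← Nat.cast_mul, ← Nat.cast_sum]
  refine div_le_of_le_mul₀ (Nat.cast_nonneg _) (by positivity) ?_
  rw [one_div_mul_eq_div, le_div_iff₀' (by exact_mod_cast hS)]
  exact_mod_cast hkey

theorem probContainsMatchingUpperBound (n x : ℕ) (hx1 : 1 ≤ x) (hxn : x ≤ n)
    (X : Finset (Finset (Fin (2*n)))) (hX : IsMatching X) (hXcard : X.card = x) :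
    (Nat.card {M : Finset (Finset (Fin (2*n))) // IsPerfectMatching M ∧ X ⊆ M} : ℚ) /
        (Nat.card {M : Finset (Finset (Fin (2*n))) // IsPerfectMatching M}) ≤
      1 / ∑ j ∈ Finset.Icc (2*x - n) x,
          (((2*x).choose (2*j) : ℚ) * ((2*j).factorial : ℚ)) /
            ((j.factorial : ℚ) * 2^j) :=
  probContainsMatchingUpperBound_general n x hxn X hX hXcard
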